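/- arXiv:1906.11342 — 7 statements merged into one kernel-verified Lean document; each statement's English description precedes it below -/
import Mathlib

section
/- Let n ≥ 3 and k ≥ 2 with k even, and let (x, c, u) be a combinatorial magic polygon P(n,k). Then the sum of the labels at all vertices of all the concentric polygons, S₁ = ∑_{i : Fin n} ∑_{t : Fin (k/2)} x t (i·k), equals (k·n/2)·c. -/
/-- The labeling function of a combinatorial magic polygon `P(n,k)`:
all boundary labels `x t p` together with the center label `c`. -/
def magicLabels (n k : ℕ) (x : Fin (k / 2) → ZMod (k * n) → ℕ) (c : ℕ) :
    (Fin (k / 2) × ZMod (k * n)) ⊕ Unit → ℕ :=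
  Sum.elim (fun q => x q.1 q.2) (fun _ => c)

/-- `(x, c, u)` is a combinatorial magic polygon `P(n,k)`:
(1) the `k²n/2 + 1` labels are exactly `1, …, k²n/2 + 1`, each occurring once;
(2) every edge sum `∑_{j=0}^{k} x t (i·k + j)` equals `u`;
(3) every diameter sum through the center equals `u`. -/
def IsMagicPolygon (n k : ℕ) (x : Fin (k / 2) → ZMod (k * n) → ℕ) (c u : ℕ) : Prop :=
  Function.Injective (magicLabels n k x c) ∧
  Set.range (magicLabels n k x c) = Set.Icc 1 (k ^ 2 * n / 2 + 1) ∧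
  (∀ t : Fin (k / 2), ∀ i : Fin n,
    ∑ j ∈ Finset.range (k + 1), x t (((i : ℕ) * k + j : ℕ)) = u) ∧
  (∀ p : ZMod (k * n),
    (∑ t : Fin (k / 2), x t p) + (∑ t : Fin (k / 2), x t (p + (k * n / 2 : ℕ))) + c = u)

lemma aux_sum_range_mul (n k : ℕ) (g : ℕ → ℕ) :
    ∑ a ∈ Finset.range (n * k), g a
      = ∑ i ∈ Finset.range n, ∑ j ∈ Finset.range k, g (i * k + j) := by
  induction n with
  | zero => simp
  | succ n ih => rw [Finset.sum_range_succ, ← ih, Nat.succ_mul, Finset.sum_range_add]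

lemma aux_zmod_sum (m : ℕ) [NeZero m] (f : ZMod m → ℕ) :
    ∑ p : ZMod m, f p = ∑ a ∈ Finset.range m, f a := by
  refine Finset.sum_nbij' (fun p => ZMod.val p) (fun a => (a : ZMod m)) ?_ ?_ ?_ ?_ ?_ <;>
    simp +contextual [ZMod.val_lt, ZMod.val_cast_of_lt, ZMod.natCast_rightInverse _,
      Nat.mod_eq_of_lt]

lemma aux_zmod_shift (m : ℕ) [NeZero m] (f : ZMod m → ℕ) (d : ZMod m) :
    ∑ p : ZMod m, f (p + d) = ∑ p : ZMod m, f p :=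
  Fintype.sum_equiv (Equiv.addRight d) _ _ (fun _ => rfl)

theorem magicPolygon_vertexSum (n k : ℕ) (hn : 3 ≤ n) (hk : 2 ≤ k) (hke : Even k)
    (x : Fin (k / 2) → ZMod (k * n) → ℕ) (c u : ℕ)
    (h : IsMagicPolygon n k x c u) :
    ∑ i : Fin n, ∑ t : Fin (k / 2), x t (((i : ℕ) * k : ℕ)) = (k * n / 2) * c := by
  obtain ⟨-, -, hedge, hdiam⟩ := h
  obtain ⟨K, hK⟩ := hke
  have hK2 : k / 2 = K := by omega
  have hm : 0 < k * n := Nat.mul_pos (by omega) (by omega)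
  haveI : NeZero (k * n) := ⟨hm.ne'⟩
  have hkn : k * n = 2 * (K * n) := by rw [hK, two_mul, add_mul]
  have hkn2 : k * n / 2 = K * n := by rw [hkn, Nat.mul_div_cancel_left _ two_pos]
  -- per-polygon edge totals
  have key : ∀ t : Fin (k / 2),
      (∑ p : ZMod (k * n), x t p) + (∑ i ∈ Finset.range n, x t ((i * k : ℕ))) = n * u := by
    intro t
    have e1 : ∑ i ∈ Finset.range n, ∑ j ∈ Finset.range (k + 1), x t ((i * k + j : ℕ)) = n * u := by
      rw [Finset.sum_congr rfl (fun i hi => hedge t ⟨i, Finset.mem_range.mp hi⟩)]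
      simp [mul_comm]
    have e2 : ∑ i ∈ Finset.range n, ∑ j ∈ Finset.range k, x t ((i * k + j : ℕ))
        = ∑ p : ZMod (k * n), x t p := by
      rw [← aux_sum_range_mul n k (fun a => x t ((a : ℕ) : ZMod (k * n))),
        aux_zmod_sum (k * n) (fun p => x t p), mul_comm n k]
    have e3 : ∑ i ∈ Finset.range n, x t ((i * k + k : ℕ))
        = ∑ i ∈ Finset.range n, x t ((i * k : ℕ)) := by
      have f0 : x t ((n * k : ℕ)) = x t ((0 * k : ℕ)) := by
        rw [show ((n * k : ℕ) : ZMod (k * n)) = 0 by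
          rw [mul_comm n k]; exact_mod_cast ZMod.natCast_self _]
        norm_num
      have s1 := Finset.sum_range_succ' (fun i => x t ((i * k : ℕ))) n
      have s2 := Finset.sum_range_succ (fun i => x t ((i * k : ℕ))) n
      simp only [add_mul, one_mul] at *
      omega
    simp only [Finset.sum_range_succ] at e1
    rw [Finset.sum_add_distrib, e2, e3] at e1
    exact e1
  -- sum edge totals over all polygons
  have h1 : (∑ p : ZMod (k * n), ∑ t : Fin (k / 2), x t p)
      + (∑ i ∈ Finset.range n, ∑ t : Fin (k / 2), x t ((i * k : ℕ))) = K * (n * u) := by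
    have h1' := Finset.sum_congr rfl (fun t (_ : t ∈ (Finset.univ : Finset (Fin (k / 2)))) => key t)
    rw [Finset.sum_add_distrib] at h1'
    have sc1 : ∑ t : Fin (k / 2), ∑ p : ZMod (k * n), x t p
        = ∑ p : ZMod (k * n), ∑ t : Fin (k / 2), x t p := Finset.sum_comm
    have sc2 : ∑ t : Fin (k / 2), ∑ i ∈ Finset.range n, x t ((i * k : ℕ))
        = ∑ i ∈ Finset.range n, ∑ t : Fin (k / 2), x t ((i * k : ℕ)) := Finset.sum_comm
    rw [sc1, sc2] at h1'
    simpa [hK2] using h1'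
  -- sum diameter equations over all points
  have h2 : (∑ p : ZMod (k * n), ∑ t : Fin (k / 2), x t p)
      + (∑ p : ZMod (k * n), ∑ t : Fin (k / 2), x t p) + (k * n) * c = (k * n) * u := by
    have h2' := Finset.sum_congr rfl (fun p (_ : p ∈ (Finset.univ : Finset (ZMod (k * n)))) => hdiam p)
    rw [Finset.sum_add_distrib, Finset.sum_add_distrib,
      aux_zmod_shift (k * n) (fun p => ∑ t : Fin (k / 2), x t p) ((k * n / 2 : ℕ))] at h2'
    simpa [Finset.card_univ, ZMod.card, mul_comm] using h2'
  rw [Fin.sum_univ_eq_sum_range (fun i => ∑ t : Fin (k / 2), x t ((i * k : ℕ))) n, hkn2]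
  set S := ∑ i ∈ Finset.range n, ∑ t : Fin (k / 2), x t ((i * k : ℕ)) with hS
  set Sig := ∑ p : ZMod (k * n), ∑ t : Fin (k / 2), x t p with hSig
  rw [hkn] at h2
  nlinarith [h1, h2]
end

section
/- Fix n ≥ 3, labels x : Fin 2 → ZMod (4n) → ℕ, and the center label c = 4n+1. Assume: (a) the 8n+1 labels (all values x t p together with c) are exactly the integers 1, 2, …, 8n+1, each occurring once; (b) x 0 p + x 1 p = 2(4n+1) for every p : ZMod (4n); (c) ∑_{j=0}^{4} x 0 (4i + j) = 5(4n+1) for every i : Fin n. Then (x, c) is a combinatorial magic polygon P(n,4) with magic sum 5(4n+1); that is, ∑_{j=0}^{4} x t (4i + j) = 5(4n+1) for every t : Fin 2 and i : Fin n, and x 0 p + x 1 p + c + x 0 (p + 2n) + x 1 (p + 2n) = 5(4n+1) for every p : ZMod (4n). -/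
/-- The labeling function for `P(n,4)`: the boundary labels `x t p` of the two
concentric `n`-gons together with the center label `c`. -/
def magicLabels4 (n : ℕ) (x : Fin 2 → ZMod (4 * n) → ℕ) (c : ℕ) :
    (Fin 2 × ZMod (4 * n)) ⊕ Unit → ℕ :=
  Sum.elim (fun q => x q.1 q.2) (fun _ => c)

theorem magicPolygon4_construction (n : ℕ) (hn : 3 ≤ n)
    (x : Fin 2 → ZMod (4 * n) → ℕ)
    -- (a) the `8n+1` labels, together with the center label `c = 4n+1`,
    -- are exactly the integers `1, …, 8n+1`, each occurring once
    (ha₁ : Function.Injective (magicLabels4 n x (4 * n + 1)))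
    (ha₂ : Set.range (magicLabels4 n x (4 * n + 1)) = Set.Icc 1 (8 * n + 1))
    -- (b) diametrically opposite labels sum to `2(4n+1)`
    (hb : ∀ p : ZMod (4 * n), x 0 p + x 1 p = 2 * (4 * n + 1))
    -- (c) the edge sums on the outer polygon equal `5(4n+1)`
    (hc : ∀ i : Fin n, ∑ j ∈ Finset.range 5, x 0 ((4 * (i : ℕ) + j : ℕ)) = 5 * (4 * n + 1)) :
    -- then `(x, 4n+1)` is a magic polygon `P(n,4)` with magic sum `5(4n+1)`:
    (∀ t : Fin 2, ∀ i : Fin n,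
      ∑ j ∈ Finset.range 5, x t ((4 * (i : ℕ) + j : ℕ)) = 5 * (4 * n + 1)) ∧
    (∀ p : ZMod (4 * n),
      x 0 p + x 1 p + (4 * n + 1) + x 0 (p + (2 * n : ℕ)) + x 1 (p + (2 * n : ℕ))
        = 5 * (4 * n + 1)) := by
  constructor
  · intro t i
    fin_cases t
    · exact hc i
    · show ∑ j ∈ Finset.range 5, x 1 ((4 * (i : ℕ) + j : ℕ)) = 5 * (4 * n + 1)
      have h1 : ∑ j ∈ Finset.range 5, (x 0 ((4 * (i : ℕ) + j : ℕ)) +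
          x 1 ((4 * (i : ℕ) + j : ℕ))) = 5 * (2 * (4 * n + 1)) := by
        simp [hb]
      rw [Finset.sum_add_distrib, hc i] at h1
      omega
  · intro p
    have h1 := hb p
    have h2 := hb (p + (2 * n : ℕ))
    omega
end

section
/- Let n ≥ 4 be even and let (z, c, u) be a combinatorial magic polygon P(n,2). Then the magic sum satisfies u = 3(n+1) and the center label satisfies c = n+1. -/
/-- The labeling function of a combinatorial magic polygon `P(n,2)`:
the `2n` boundary labels `z p` (even positions are vertices, odd positions are
edge midpoints) together with the center label `c`. -/
def magicLabels2 (n : ℕ) (z : ZMod (2 * n) → ℕ) (c : ℕ) : ZMod (2 * n) ⊕ Unit → ℕ :=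
  Sum.elim z (fun _ => c)

/-- `(z, c, u)` is a combinatorial magic polygon `P(n,2)`:
(1) the `2n+1` labels are exactly `1, …, 2n+1`, each occurring once;
(2) every side sum `z (2i) + z (2i+1) + z (2i+2)` equals `u`;
(3) every sum `z p + c + z (p + n)` along a symmetry axis equals `u`. -/
def IsMagicPolygon2 (n : ℕ) (z : ZMod (2 * n) → ℕ) (c u : ℕ) : Prop :=
  Function.Injective (magicLabels2 n z c) ∧
  Set.range (magicLabels2 n z c) = Set.Icc 1 (2 * n + 1) ∧
  (∀ i : ZMod (2 * n), z (2 * i) + z (2 * i + 1) + z (2 * i + 2) = u) ∧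
  (∀ p : ZMod (2 * n), z p + c + z (p + (n : ℕ)) = u)

/-- Sum over `ZMod N` equals sum over `range N`. -/
lemma auxSumZMod (N : ℕ) [NeZero N] (g : ZMod N → ℕ) :
    ∑ p : ZMod N, g p = ∑ i ∈ Finset.range N, g (i : ZMod N) := by
  have himg : (Finset.range N).image (Nat.cast : ℕ → ZMod N) = Finset.univ := by
    apply Finset.eq_univ_iff_forall.mpr
    intro p
    exact Finset.mem_image.mpr ⟨p.val, Finset.mem_range.mpr (ZMod.val_lt p),
      ZMod.natCast_rightInverse p⟩
  rw [← himg, Finset.sum_image]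
  intro x hx y hy hxy
  have := congrArg ZMod.val hxy
  rwa [ZMod.val_cast_of_lt (Finset.mem_range.mp hx),
    ZMod.val_cast_of_lt (Finset.mem_range.mp hy)] at this

lemma auxShift1 (g : ℕ → ℕ) (n : ℕ) (hg : g n = g 0) :
    ∑ i ∈ Finset.range n, g (i + 1) = ∑ i ∈ Finset.range n, g i := by
  have h1 := Finset.sum_range_succ' g n
  have h2 := Finset.sum_range_succ g n
  omega

lemma auxShift (f : ℕ → ℕ) (n : ℕ) (hf : ∀ i, f (i + n) = f i) (m : ℕ) :
    ∑ i ∈ Finset.range n, f (i + m) = ∑ i ∈ Finset.range n, f i := by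
  induction m with
  | zero => simp
  | succ m ih =>
      have h1 : ∑ i ∈ Finset.range n, f (i + (m + 1))
          = ∑ i ∈ Finset.range n, (fun j => f (j + m)) (i + 1) := by
        apply Finset.sum_congr rfl
        intro i _
        simp only []
        congr 1
        omega
      rw [h1, auxShift1 (fun j => f (j + m)) n (by
        simp only [Nat.zero_add]
        rw [Nat.add_comm n m]
        exact hf m), ih]

lemma auxInterleave (h : ℕ → ℕ) (m : ℕ) :
    ∑ j ∈ Finset.range (2 * m), h j
      = ∑ i ∈ Finset.range m, (h (2 * i) + h (2 * i + 1)) := by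
  induction m with
  | zero => simp
  | succ m ih =>
      rw [show 2 * (m + 1) = (2 * m + 1) + 1 by ring, Finset.sum_range_succ,
        Finset.sum_range_succ, Finset.sum_range_succ, ih, add_assoc]

lemma auxDouble (f : ℕ → ℕ) (k : ℕ) :
    ∑ x ∈ Finset.range (2 * k), f x
      = ∑ x ∈ Finset.range k, f x + ∑ x ∈ Finset.range k, f (k + x) := by
  rw [two_mul, Finset.sum_range_add]

theorem magicPolygon2_sum_center (n : ℕ) (hn : 4 ≤ n) (hne : Even n)
    (z : ZMod (2 * n) → ℕ) (c u : ℕ) (h : IsMagicPolygon2 n z c u) :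
    u = 3 * (n + 1) ∧ c = n + 1 := by
  obtain ⟨hinj, hrange, hside, haxis⟩ := h
  haveI : NeZero (2 * n) := ⟨by omega⟩
  obtain ⟨m, hm⟩ := hne
  have hm' : n = 2 * m := by omega
  -- basic cast fact
  have h2n : ((n : ZMod (2 * n)) * 2) = 0 := by
    have := ZMod.natCast_self (2 * n)
    push_cast at this
    linear_combination this
  set S := ∑ p : ZMod (2 * n), z p with hS
  set E := ∑ i ∈ Finset.range n, z ((2 * i : ℕ) : ZMod (2 * n)) with hE
  set O := ∑ i ∈ Finset.range n, z ((2 * i + 1 : ℕ) : ZMod (2 * n)) with hO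
  -- periodicity of the vertex / midpoint label sequences
  have hfper : ∀ i : ℕ, z (((2 * (i + n) : ℕ)) : ZMod (2 * n))
      = z (((2 * i : ℕ)) : ZMod (2 * n)) := by
    intro i; congr 1; push_cast; linear_combination h2n
  have hgper : ∀ i : ℕ, z (((2 * (i + n) + 1 : ℕ)) : ZMod (2 * n))
      = z (((2 * i + 1 : ℕ)) : ZMod (2 * n)) := by
    intro i; congr 1; push_cast; linear_combination h2n
  -- total sum of labels
  have htot : 2 * (S + c) = (2 * n + 2) * (2 * n + 1) := by
    have himg : Finset.image (magicLabels2 n z c) Finset.univ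
        = Finset.Icc 1 (2 * n + 1) := by
      apply Finset.coe_injective
      rw [Finset.coe_image, Finset.coe_univ, Set.image_univ, hrange, Finset.coe_Icc]
    have h1 : ∑ x : ZMod (2 * n) ⊕ Unit, magicLabels2 n z c x
        = ∑ k ∈ Finset.Icc 1 (2 * n + 1), k := by
      rw [← himg, Finset.sum_image (fun x _ y _ hxy => hinj hxy)]
    have h2 : ∑ x : ZMod (2 * n) ⊕ Unit, magicLabels2 n z c x = S + c := by
      rw [Fintype.sum_sum_type]
      simp [magicLabels2, hS]
    have h3 : Finset.range (2 * n + 2) = insert 0 (Finset.Icc 1 (2 * n + 1)) := by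
      ext x; simp [Nat.lt_succ_iff]; omega
    have h4 : ∑ k ∈ Finset.range (2 * n + 2), k = ∑ k ∈ Finset.Icc 1 (2 * n + 1), k := by
      rw [h3, Finset.sum_insert (by simp), zero_add]
    have h5 := Finset.sum_range_id_mul_two (2 * n + 2)
    rw [show 2 * n + 2 - 1 = 2 * n + 1 by omega] at h5
    omega
  -- S = E + O
  have hEO : E + O = S := by
    rw [hE, hO, hS, auxSumZMod, ← Finset.sum_add_distrib,
      ← auxInterleave (fun j => z ((j : ℕ) : ZMod (2 * n))) n]
  -- side sums summed over all of ZMod (2n)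
  have hsideTot : 2 * E + 2 * O + 2 * E = 2 * (n * u) := by
    have h1 : ∑ i : ZMod (2 * n), (z (2 * i) + z (2 * i + 1) + z (2 * i + 2))
        = ∑ _i : ZMod (2 * n), u := Finset.sum_congr rfl (fun i _ => hside i)
    have h2 : ∑ _i : ZMod (2 * n), u = 2 * n * u := by
      rw [Finset.sum_const, Finset.card_univ, ZMod.card, smul_eq_mul]
    have hA : ∑ i : ZMod (2 * n), z (2 * i) = 2 * E := by
      rw [auxSumZMod (2 * n) (fun i => z (2 * i))]
      have hc1 : ∀ i ∈ Finset.range (2 * n),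
          z (2 * (i : ZMod (2 * n))) = z ((2 * i : ℕ) : ZMod (2 * n)) := by
        intro i _; congr 1; push_cast; ring
      rw [Finset.sum_congr rfl hc1, auxDouble (fun i => z ((2 * i : ℕ) : ZMod (2 * n))) n]
      have heq2 : ∑ i ∈ Finset.range n, z ((2 * (n + i) : ℕ) : ZMod (2 * n)) = E := by
        rw [hE]
        apply Finset.sum_congr rfl
        intro i _
        rw [Nat.add_comm n i]
        exact hfper i
      rw [heq2, ← hE]
      ring
    have hB : ∑ i : ZMod (2 * n), z (2 * i + 1) = 2 * O := by
      rw [auxSumZMod (2 * n) (fun i => z (2 * i + 1))]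
      have hc1 : ∀ i ∈ Finset.range (2 * n),
          z (2 * (i : ZMod (2 * n)) + 1) = z ((2 * i + 1 : ℕ) : ZMod (2 * n)) := by
        intro i _; congr 1; push_cast; ring
      rw [Finset.sum_congr rfl hc1, auxDouble (fun i => z ((2 * i + 1 : ℕ) : ZMod (2 * n))) n]
      have heq2 : ∑ i ∈ Finset.range n, z ((2 * (n + i) + 1 : ℕ) : ZMod (2 * n)) = O := by
        rw [hO]
        apply Finset.sum_congr rfl
        intro i _
        rw [Nat.add_comm n i]
        exact hgper i
      rw [heq2, ← hO]
      ring
    have hC : ∑ i : ZMod (2 * n), z (2 * i + 2) = 2 * E := by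
      have hc1 : ∑ i : ZMod (2 * n), z (2 * i + 2)
          = ∑ i : ZMod (2 * n), z (2 * (i + 1)) := by
        apply Finset.sum_congr rfl
        intro i _; congr 1; ring
      rw [hc1, ← hA]
      exact Fintype.sum_equiv (Equiv.addRight (1 : ZMod (2 * n))) _ _ (fun i => rfl)
    rw [Finset.sum_add_distrib, Finset.sum_add_distrib, hA, hB, hC, h2] at h1
    rw [show 2 * (n * u) = 2 * n * u by ring]
    exact h1
  -- axis sums over all p
  have haxisTot : S + 2 * (n * c) + S = 2 * (n * u) := by
    have h1 : ∑ p : ZMod (2 * n), (z p + c + z (p + (n : ℕ)))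
        = ∑ _p : ZMod (2 * n), u := Finset.sum_congr rfl (fun p _ => haxis p)
    have h2 : ∑ _p : ZMod (2 * n), u = 2 * n * u := by
      rw [Finset.sum_const, Finset.card_univ, ZMod.card, smul_eq_mul]
    have h3 : ∑ p : ZMod (2 * n), z (p + (n : ℕ)) = S := by
      rw [hS]
      exact Fintype.sum_equiv (Equiv.addRight ((n : ℕ) : ZMod (2 * n))) _ _ (fun p => rfl)
    have h4 : ∑ _p : ZMod (2 * n), c = 2 * n * c := by
      rw [Finset.sum_const, Finset.card_univ, ZMod.card, smul_eq_mul]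
    rw [Finset.sum_add_distrib, Finset.sum_add_distrib, ← hS, h3, h4, h2] at h1
    rw [show 2 * (n * c) = 2 * n * c by ring, show 2 * (n * u) = 2 * n * u by ring]
    exact h1
  -- axis sums over the even positions
  have haxisEven : E + n * c + E = n * u := by
    have h1 : ∑ i ∈ Finset.range n,
        (z ((2 * i : ℕ) : ZMod (2 * n)) + c + z (((2 * i : ℕ) : ZMod (2 * n)) + (n : ℕ)))
        = ∑ _i ∈ Finset.range n, u :=
      Finset.sum_congr rfl (fun i _ => haxis _)
    have h2 : ∑ _i ∈ Finset.range n, u = n * u := by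
      rw [Finset.sum_const, Finset.card_range, smul_eq_mul]
    have h3 : ∀ i ∈ Finset.range n,
        z (((2 * i : ℕ) : ZMod (2 * n)) + (n : ℕ)) = z ((2 * (i + m) : ℕ) : ZMod (2 * n)) := by
      intro i _; congr 1; push_cast; rw [hm']; push_cast; ring
    have h4 : ∑ i ∈ Finset.range n, z (((2 * i : ℕ) : ZMod (2 * n)) + (n : ℕ)) = E := by
      rw [Finset.sum_congr rfl h3, hE]
      exact auxShift (fun i => z ((2 * i : ℕ) : ZMod (2 * n))) n (fun i => hfper i) m
    have h5 : ∑ _i ∈ Finset.range n, c = n * c := by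
      rw [Finset.sum_const, Finset.card_range, smul_eq_mul]
    rw [Finset.sum_add_distrib, Finset.sum_add_distrib, ← hE, h4, h5, h2] at h1
    exact h1
  -- pure arithmetic from here on
  have e1 : (2 * n + 1) * (2 * c) = 4 * (n * c) + 2 * c := by ring
  have e2 : (2 * n + 2) * (2 * n + 1) = (2 * n + 1) * (2 * (n + 1)) := by ring
  clear_value S E O
  obtain ⟨K, hK⟩ : ∃ K, n * c = K := ⟨_, rfl⟩
  obtain ⟨L, hL⟩ : ∃ L, n * u = L := ⟨_, rfl⟩
  obtain ⟨M, hM⟩ : ∃ M, (2 * n + 2) * (2 * n + 1) = M := ⟨_, rfl⟩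
  rw [hL] at hsideTot
  rw [hK, hL] at haxisTot
  rw [hK, hL] at haxisEven
  rw [hM] at htot
  rw [hK] at e1
  rw [hM] at e2
  have hfin : (2 * n + 1) * (2 * c) = (2 * n + 1) * (2 * (n + 1)) := by
    rw [e1, ← e2]
    omega
  have hc : c = n + 1 := by
    have := Nat.eq_of_mul_eq_mul_left (show 0 < 2 * n + 1 by omega) hfin
    omega
  have hu : u = 3 * (n + 1) := by
    have hL3K : L = 3 * K := by omega
    have h1 : n * u = n * (3 * (n + 1)) := by
      rw [hL, hL3K, ← hK, hc]; ring
    exact Nat.eq_of_mul_eq_mul_left (by omega) h1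
  exact ⟨hu, hc⟩
end

section
/- If n ≥ 3 is odd, then there is no combinatorial magic polygon P(n,2); that is, no labels z : ZMod (2n) → ℕ, center label c, and magic sum u satisfy the defining conditions. -/
theorem magicPolygon2_odd_nonexistence (n : ℕ) (hn : 3 ≤ n) (hno : Odd n) :
    ¬ ∃ (z : ZMod (2 * n) → ℕ) (c u : ℕ), IsMagicPolygon2 n z c u := by
  rintro ⟨z, c, u, hinj, -, hside, haxis⟩
  obtain ⟨m, hm⟩ := hno
  set f : ZMod (2 * n) → ℕ := fun i => z (2 * i) with hf
  -- cast of n in ZMod (2n)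
  have hcast : ((n : ℕ) : ZMod (2 * n)) = 2 * ((m : ℕ) : ZMod (2 * n)) + 1 := by
    rw [hm]; push_cast; ring
  have h2n0 : (2 : ZMod (2 * n)) * ((n : ℕ) : ZMod (2 * n)) = 0 := by
    have := ZMod.natCast_self (2 * n)
    push_cast at this
    exact this
  -- periodicity of f with period n
  have hper : ∀ j : ZMod (2 * n), f (j + ((n : ℕ) : ZMod (2 * n))) = f j := by
    intro j
    simp only [hf]
    congr 1
    calc 2 * (j + ((n : ℕ) : ZMod (2 * n)))
        = 2 * j + 2 * ((n : ℕ) : ZMod (2 * n)) := by ring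
      _ = 2 * j := by rw [h2n0, add_zero]
  -- key relation E1
  have E1 : ∀ i : ZMod (2 * n),
      f i + f (i + 1) = c + f (i + ((m + 1 : ℕ) : ZMod (2 * n))) := by
    intro i
    have h1 := hside i
    have h2 := haxis (2 * i + 1)
    simp only [hf]
    have e1 : (2 : ZMod (2 * n)) * (i + 1) = 2 * i + 2 := by ring
    have e2 : (2 : ZMod (2 * n)) * (i + ((m + 1 : ℕ) : ZMod (2 * n)))
        = 2 * i + 1 + ((n : ℕ) : ZMod (2 * n)) := by
      push_cast
      rw [hcast]; ring
    rw [e1, e2]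
    omega
  -- E2 : triple sums of consecutive vertices are constant
  have E2 : ∀ i : ZMod (2 * n), f i + f (i + 1) + f (i + 2) = 3 * c := by
    intro i
    have a := E1 i
    have b := E1 (i + 1)
    have cK := E1 (i + ((m + 1 : ℕ) : ZMod (2 * n)))
    have e : i + ((m + 1 : ℕ) : ZMod (2 * n)) + ((m + 1 : ℕ) : ZMod (2 * n))
        = (i + 1) + ((n : ℕ) : ZMod (2 * n)) := by
      push_cast
      rw [hcast]; ring
    rw [e, hper (i + 1)] at cK
    have e2 : i + ((m + 1 : ℕ) : ZMod (2 * n)) + 1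
        = i + 1 + ((m + 1 : ℕ) : ZMod (2 * n)) := by ring
    rw [e2] at cK
    have e3 : i + 1 + 1 = i + 2 := by ring
    rw [e3] at b
    omega
  -- period 3
  have hper3 : ∀ j : ZMod (2 * n), f (j + 3) = f j := by
    intro j
    have a := E2 j
    have b := E2 (j + 1)
    have e1 : j + 1 + 1 = j + 2 := by ring
    have e2 : j + 1 + 2 = j + 3 := by ring
    rw [e1, e2] at b
    omega
  have p3t : ∀ (t : ℕ) (j : ZMod (2 * n)), f (j + ((3 * t : ℕ) : ZMod (2 * n))) = f j := by
    intro t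
    induction t with
    | zero => intro j; simp
    | succ t ih =>
      intro j
      have e : ((3 * (t + 1) : ℕ) : ZMod (2 * n)) = ((3 * t : ℕ) : ZMod (2 * n)) + 3 := by
        push_cast; ring
      rw [e, ← add_assoc, hper3, ih]
  -- the "negation" relation
  have H : ∀ j : ZMod (2 * n),
      f (j + ((m + 2 : ℕ) : ZMod (2 * n))) + f j = 2 * c := by
    intro j
    have a := E1 (j + 1)
    have b := E2 j
    have e1 : j + 1 + 1 = j + 2 := by ring
    rw [e1] at a
    have e2 : j + 1 + ((m + 1 : ℕ) : ZMod (2 * n)) = j + ((m + 2 : ℕ) : ZMod (2 * n)) := by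
      push_cast; ring
    rw [e2] at a
    omega
  -- conclude f 0 = c
  set s : ZMod (2 * n) := ((m + 2 : ℕ) : ZMod (2 * n)) with hs
  have h1 := H 0
  have h2 := H (0 + s)
  have h3 := H (0 + s + s)
  have hp := p3t (m + 2) 0
  have e : (0 : ZMod (2 * n)) + ((3 * (m + 2) : ℕ) : ZMod (2 * n)) = 0 + s + s + s := by
    simp only [hs]; push_cast; ring
  rw [e] at hp
  have hf0 : f 0 = c := by omega
  have hz0 : z 0 = c := by
    have : f 0 = z 0 := by simp only [hf]; norm_num
    omega
  have : (Sum.inl (0 : ZMod (2 * n)) : ZMod (2 * n) ⊕ Unit) = Sum.inr () := by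
    apply hinj
    simp [magicLabels2, hz0]
  simp at this
end

section
/- For every even integer n ≥ 4 there exists a combinatorial magic polygon P(n,2); that is, there exist labels z : ZMod (2n) → ℕ, a center label c, and a magic sum u satisfying the defining conditions. -/
set_option maxHeartbeats 4000000

/-- Vertex labels of our magic-polygon construction: for `n = 2*m`, the vertex at
position `2*i` of the polygon (`i < 2*m`) gets the label `Vf m i`. -/
def Vf (m i : ℕ) : ℕ :=
  if m = 2 then (if i = 0 then 6 else if i = 1 then 8 else if i = 2 then 4 else 2)
  else if i = 0 then 4*m+1
  else if i = m-1 then 2*m+3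
  else if i < m then (if i % 2 = 1 then i+1 else 2*m+i+2)
  else if i = m then 1
  else if i = 2*m-1 then 2*m-1
  else if (i-m) % 2 = 1 then 4*m+1-(i-m)
  else 2*m-(i-m)

/-- Closed form for the sums `Vf m j + Vf m ((j+1) % (2*m))` of adjacent vertex labels. -/
def Scl (m j : ℕ) : ℕ :=
  if m = 2 then (if j = 0 then 14 else if j = 1 then 12 else if j = 2 then 6 else 8)
  else if j = 0 then 4*m+3
  else if j < m-2 then 2*m+2*j+4
  else if j = m-2 then (if m % 2 = 0 then 5*m+3 else 3*m+2)
  else if j = m-1 then 2*m+4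
  else if j = m then 4*m+1
  else if j < 2*m-2 then 6*m-2*(j-m)
  else if j = 2*m-2 then (if m % 2 = 0 then 3*m+1 else 5*m+2)
  else 6*m

/-- The boundary labeling as a function of the position `p < 4*m`:
even positions are vertices, odd positions are midpoints. -/
def zf (m p : ℕ) : ℕ :=
  if p % 2 = 0 then Vf m (p / 2)
  else 6*m+3 - (Vf m (p / 2) + Vf m ((p / 2 + 1) % (2*m)))

lemma Vf_bounds {m i : ℕ} (hm : 2 ≤ m) (hi : i < 2*m) :
    1 ≤ Vf m i ∧ Vf m i ≤ 4*m+1 ∧ Vf m i ≠ 2*m+1 := by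
  unfold Vf; split_ifs <;> first | contradiction | omega

lemma Vf_inj {m i j : ℕ} (hm : 2 ≤ m) (hi : i < 2*m) (hj : j < 2*m)
    (h : Vf m i = Vf m j) : i = j := by
  unfold Vf at h; split_ifs at h <;> first | contradiction | omega

lemma Vf_axis {m i : ℕ} (hm : 2 ≤ m) (hi : i < m) :
    Vf m i + Vf m (i+m) = 4*m+2 := by
  unfold Vf; split_ifs <;> first | contradiction | omega

lemma Ssum {m j : ℕ} (hm : 2 ≤ m) (hj : j < 2*m) :
    Vf m j + Vf m ((j+1) % (2*m)) = Scl m j := by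
  rcases eq_or_ne j (2*m-1) with h | h
  · have h1 : (j+1) % (2*m) = 0 := by
      subst h
      have h2 : 2*m-1+1 = 2*m := by omega
      rw [h2, Nat.mod_self]
    rw [h1]; unfold Vf Scl; split_ifs <;> first | contradiction | omega
  · have h1 : (j+1) % (2*m) = j+1 := Nat.mod_eq_of_lt (by omega)
    rw [h1]; unfold Vf Scl; split_ifs <;> first | contradiction | omega

lemma Scl_bounds {m j : ℕ} (hm : 2 ≤ m) (hj : j < 2*m) :
    2*m+2 ≤ Scl m j ∧ Scl m j ≤ 6*m+2 ∧ Scl m j ≠ 4*m+2 := by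
  unfold Scl; split_ifs <;> first | contradiction | omega

lemma Scl_inj {m i j : ℕ} (hm : 2 ≤ m) (hi : i < 2*m) (hj : j < 2*m)
    (h : Scl m i = Scl m j) : i = j := by
  unfold Scl at h; split_ifs at h <;> first | contradiction | omega

lemma Vf_Scl_disj {m i j : ℕ} (hm : 2 ≤ m) (hi : i < 2*m) (hj : j < 2*m) :
    Vf m i + Scl m j ≠ 6*m+3 := by
  unfold Vf Scl; split_ifs <;> first | contradiction | omega

lemma Scl_axis {m j : ℕ} (hm : 2 ≤ m) (hj : j < 2*m) :
    Scl m j + Scl m ((j+m) % (2*m)) = 8*m+4 := by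
  rcases lt_or_ge j m with h | h
  · have h1 : (j+m) % (2*m) = j+m := Nat.mod_eq_of_lt (by omega)
    rw [h1]; unfold Scl; split_ifs <;> first | contradiction | omega
  · have h1 : (j+m) % (2*m) = j-m := by
      rw [Nat.mod_eq_sub_mod (show 2*m ≤ j+m by omega),
        show j+m-2*m = j-m by omega]
      apply Nat.mod_eq_of_lt
      omega
    rw [h1]; unfold Scl; split_ifs <;> first | contradiction | omega

lemma zf_even (m k : ℕ) : zf m (2*k) = Vf m k := by
  have h0 : (2*k) % 2 = 0 := Nat.mul_mod_right 2 k
  have h1 : (2*k) / 2 = k := Nat.mul_div_cancel_left k (by norm_num)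
  simp [zf, h0, h1]

lemma zf_odd {m k : ℕ} (hm : 2 ≤ m) (hk : k < 2*m) :
    zf m (2*k+1) = 6*m+3 - Scl m k := by
  have h0 : (2*k+1) % 2 = 1 := by omega
  have h1 : (2*k+1) / 2 = k := by omega
  rw [zf, h1, h0]
  simp only [Ssum hm hk]
  norm_num

lemma zf_bounds {m p : ℕ} (hm : 2 ≤ m) (hp : p < 4*m) :
    1 ≤ zf m p ∧ zf m p ≤ 4*m+1 ∧ zf m p ≠ 2*m+1 := by
  rcases Nat.even_or_odd p with ⟨k, hk⟩ | ⟨k, hk⟩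
  · have h : p = 2*k := by omega
    rw [h, zf_even]
    exact Vf_bounds hm (by omega)
  · have h : p = 2*k+1 := by omega
    rw [h, zf_odd hm (by omega)]
    have := Scl_bounds hm (show k < 2*m by omega)
    omega

lemma zf_inj {m p q : ℕ} (hm : 2 ≤ m) (hp : p < 4*m) (hq : q < 4*m)
    (h : zf m p = zf m q) : p = q := by
  rcases Nat.even_or_odd p with ⟨k, hk⟩ | ⟨k, hk⟩ <;>
    rcases Nat.even_or_odd q with ⟨l, hl⟩ | ⟨l, hl⟩
  · have hp' : p = 2*k := by omega
    have hq' : q = 2*l := by omega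
    rw [hp', hq', zf_even, zf_even] at h
    have := Vf_inj hm (show k < 2*m by omega) (show l < 2*m by omega) h
    omega
  · have hp' : p = 2*k := by omega
    have hq' : q = 2*l+1 := by omega
    rw [hp', hq', zf_even, zf_odd hm (by omega)] at h
    have h1 := Scl_bounds hm (show l < 2*m by omega)
    have h2 := Vf_Scl_disj hm (show k < 2*m by omega) (show l < 2*m by omega)
    omega
  · have hp' : p = 2*k+1 := by omega
    have hq' : q = 2*l := by omega
    rw [hp', hq', zf_odd hm (by omega), zf_even] at h
    have h1 := Scl_bounds hm (show k < 2*m by omega)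
    have h2 := Vf_Scl_disj hm (show l < 2*m by omega) (show k < 2*m by omega)
    omega
  · have hp' : p = 2*k+1 := by omega
    have hq' : q = 2*l+1 := by omega
    rw [hp', hq', zf_odd hm (by omega), zf_odd hm (by omega)] at h
    have h1 := Scl_bounds hm (show k < 2*m by omega)
    have h2 := Scl_bounds hm (show l < 2*m by omega)
    have := Scl_inj hm (show k < 2*m by omega) (show l < 2*m by omega) (by omega)
    omega

lemma even_mod {m : ℕ} (t : ℕ) : (2*t) % (4*m) = 2*(t % (2*m)) := by
  rw [show 4*m = 2*(2*m) by ring, Nat.mul_mod_mul_left]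

lemma odd_mod {m : ℕ} (hm : 0 < m) (t : ℕ) :
    (2*t+1) % (4*m) = 2*(t % (2*m)) + 1 := by
  have h1 : (2*t) % (4*m) = 2*(t % (2*m)) := even_mod t
  have hlt : t % (2*m) < 2*m := Nat.mod_lt t (by omega)
  calc (2*t+1) % (4*m) = ((2*t) % (4*m) + 1 % (4*m)) % (4*m) := by rw [Nat.add_mod]
    _ = (2*(t % (2*m)) + 1) % (4*m) := by rw [h1, Nat.mod_eq_of_lt (show 1 < 4*m by omega)]
    _ = 2*(t % (2*m)) + 1 := Nat.mod_eq_of_lt (by omega)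

lemma side_nat {m j : ℕ} (hm : 2 ≤ m) (hj : j < 4*m) :
    zf m ((2*j) % (4*m)) + zf m ((2*j+1) % (4*m)) + zf m ((2*j+2) % (4*m)) = 6*m+3 := by
  have hk : j % (2*m) < 2*m := Nat.mod_lt j (by omega)
  have e1 : (2*j) % (4*m) = 2*(j % (2*m)) := even_mod j
  have e2 : (2*j+1) % (4*m) = 2*(j % (2*m))+1 := odd_mod (by omega) j
  have e3 : (2*j+2) % (4*m) = 2*((j % (2*m) + 1) % (2*m)) := by
    rw [show 2*j+2 = 2*(j+1) by ring, even_mod, Nat.mod_add_mod]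
  rw [e1, e2, e3, zf_even, zf_even, zf_odd hm hk]
  have h1 := Ssum hm hk
  have h2 := Scl_bounds hm hk
  omega

lemma axis_nat {m p : ℕ} (hm : 2 ≤ m) (hp : p < 4*m) :
    zf m p + (2*m+1) + zf m ((p + 2*m) % (4*m)) = 6*m+3 := by
  rcases Nat.even_or_odd p with ⟨k, hk⟩ | ⟨k, hk⟩
  · have hp' : p = 2*k := by omega
    subst hp'
    have hk2 : k < 2*m := by omega
    have e1 : (2*k + 2*m) % (4*m) = 2*((k+m) % (2*m)) := by
      rw [show 2*k+2*m = 2*(k+m) by ring, even_mod]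
    rw [e1, zf_even, zf_even]
    rcases lt_or_ge k m with h | h
    · have h2 : (k+m) % (2*m) = k+m := Nat.mod_eq_of_lt (by omega)
      rw [h2]
      have := Vf_axis hm h
      omega
    · have h2 : (k+m) % (2*m) = k-m := by
        rw [Nat.mod_eq_sub_mod (show 2*m ≤ k+m by omega),
          show k+m-2*m = k-m by omega]
        apply Nat.mod_eq_of_lt
        omega
      rw [h2]
      have h3 := Vf_axis hm (show k-m < m by omega)
      have he : k-m+m = k := by omega
      rw [he] at h3
      omega
  · have hp' : p = 2*k+1 := by omega
    subst hp'
    have hk2 : k < 2*m := by omega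
    have e1 : (2*k+1 + 2*m) % (4*m) = 2*((k+m) % (2*m)) + 1 := by
      rw [show 2*k+1+2*m = 2*(k+m)+1 by ring, odd_mod (by omega)]
    have hK : (k+m) % (2*m) < 2*m := Nat.mod_lt _ (by omega)
    rw [e1, zf_odd hm hk2, zf_odd hm hK]
    have h1 := Scl_axis hm hk2
    have h2 := Scl_bounds hm hk2
    have h3 := Scl_bounds hm hK
    omega

theorem magicPolygon2_even_existence (n : ℕ) (hn : 4 ≤ n) (hne : Even n) :
    ∃ (z : ZMod (2 * n) → ℕ) (c u : ℕ), IsMagicPolygon2 n z c u := by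
  obtain ⟨m, rfl⟩ := hne
  have hm : 2 ≤ m := by omega
  haveI : NeZero (2 * (m + m)) := ⟨by omega⟩
  have hinj : Function.Injective
      (magicLabels2 (m+m) (fun p : ZMod (2*(m+m)) => zf m p.val) (2*m+1)) := by
    rintro (p | u) (q | v) h <;>
      simp only [magicLabels2, Sum.elim_inl, Sum.elim_inr] at h
    · have hp := ZMod.val_lt p
      have hq := ZMod.val_lt q
      have hv : p.val = q.val := zf_inj hm (by omega) (by omega) h
      exact congrArg Sum.inl (ZMod.val_injective _ hv)
    · exact absurd h (zf_bounds hm (by have := ZMod.val_lt p; omega)).2.2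
    · exact absurd h.symm (zf_bounds hm (by have := ZMod.val_lt q; omega)).2.2
    · rfl
  refine ⟨fun p => zf m p.val, 2*m+1, 6*m+3, hinj, ?_, ?_, ?_⟩
  · -- the labels are exactly 1, …, 2n+1
    apply Set.eq_of_subset_of_ncard_le
    · rintro w ⟨x, rfl⟩
      rcases x with p | u
      · have hp := ZMod.val_lt p
        have := zf_bounds hm (show p.val < 4*m by omega)
        simp only [magicLabels2, Sum.elim_inl, Set.mem_Icc]
        omega
      · simp only [magicLabels2, Sum.elim_inr, Set.mem_Icc]
        omega
    · rw [← Finset.coe_Icc, Set.ncard_coe_finset, Nat.card_Icc]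
      rw [← Set.image_univ, Set.ncard_image_of_injective _ hinj, Set.ncard_univ]
      rw [Nat.card_sum, Nat.card_zmod, Nat.card_unique]
      omega
    · exact Set.finite_Icc _ _
  · -- side sums
    intro i
    have hi := ZMod.val_lt i
    have h1 : (2 * i : ZMod (2*(m+m))) = ((2 * i.val : ℕ) : ZMod (2*(m+m))) := by
      conv_lhs => rw [← ZMod.natCast_zmod_val i]
      push_cast
      ring
    have h2 : (2 * i + 1 : ZMod (2*(m+m))) = ((2 * i.val + 1 : ℕ) : ZMod (2*(m+m))) := by
      rw [h1]; push_cast; ring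
    have h3 : (2 * i + 2 : ZMod (2*(m+m))) = ((2 * i.val + 2 : ℕ) : ZMod (2*(m+m))) := by
      rw [h1]; push_cast; ring
    have hmain := side_nat hm (show i.val < 4*m by omega)
    rw [show (4:ℕ)*m = 2*(m+m) by ring] at hmain
    rw [h2, h3, h1]
    simpa only [ZMod.val_natCast] using hmain
  · -- axis sums
    intro p
    have hp := ZMod.val_lt p
    have h1 : (p + ((m + m : ℕ) : ZMod (2*(m+m)))).val = (p.val + 2*m) % (4*m) := by
      rw [ZMod.val_add, ZMod.val_natCast,
        Nat.mod_eq_of_lt (show m+m < 2*(m+m) by omega)]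
      congr 1 <;> omega
    simp only []
    rw [h1]
    exact axis_nat hm (by omega)
end

section
/- For every n ≥ 3, there is no combinatorial magic polygon P(n,2) in which the label z (2i) of every vertex is odd. -/
/-! Odd vertex labels force every midpoint label to have the parity of the magic sum `u`.
If `u` is odd, all `2n` boundary labels are odd and the center would have to carry both
labels `2` and `4`. If `u` is even, the `n` midpoints carry exactly the `n` even labels
`2, 4, …, 2n`, so the center label `c` is odd. Adding up all side sums (each vertex counted
twice) and all axis sums (each boundary label counted twice) shows that the vertex labels sum
to `n * c`; comparing with the label sums `1 + 2 + ⋯ + (2n+1)` and `2 + 4 + ⋯ + 2n` gives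
`c = n + 1`, so `n` is even. But then
the axis through a vertex joins two odd vertex labels, which makes `c` even. -/

open Finset

lemma ZMod.exists_eq_two_mul_or_eq_two_mul_add_one {m : ℕ} (p : ZMod m) :
    ∃ i, p = 2 * i ∨ p = 2 * i + 1 := by
  obtain ⟨k, rfl⟩ := ZMod.intCast_surjective p
  obtain ⟨j, rfl | rfl⟩ := Int.even_or_odd' k
  · exact ⟨j, Or.inl (by push_cast; ring)⟩
  · exact ⟨j, Or.inr (by push_cast; ring)⟩

lemma ZMod.sum_univ_eq_sum_range {M : Type*} [AddCommMonoid M] {m : ℕ} [NeZero m]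
    (f : ZMod m → M) : ∑ p, f p = ∑ k ∈ range m, f k :=
  sum_nbij' ZMod.val Nat.cast (fun p _ => mem_range.2 p.val_lt) (fun _ _ => mem_univ _)
    (fun p _ => ZMod.natCast_zmod_val p) (fun _ hk => ZMod.val_cast_of_lt (mem_range.1 hk))
    (fun p _ => by rw [ZMod.natCast_zmod_val])

lemma Finset.sum_range_two_mul {M : Type*} [AddCommMonoid M] (f : ℕ → M) (n : ℕ) :
    ∑ k ∈ range (2 * n), f k = ∑ k ∈ range n, (f (2 * k) + f (2 * k + 1)) := by
  induction n with
  | zero => simp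
  | succ n ih =>
    rw [show 2 * (n + 1) = 2 * n + 1 + 1 by ring, sum_range_succ, sum_range_succ, ih,
      sum_range_succ, add_assoc]

lemma ZMod.sum_univ_eq_sum_range_even_add_odd {M : Type*} [AddCommMonoid M] {n : ℕ} [NeZero n]
    (f : ZMod (2 * n) → M) :
    ∑ p, f p = ∑ k ∈ range n, f (2 * k) + ∑ k ∈ range n, f (2 * k + 1) := by
  rw [ZMod.sum_univ_eq_sum_range, sum_range_two_mul, sum_add_distrib]
  push_cast
  rfl

lemma Finset.sum_Icc_one_id_mul_two (m : ℕ) : (∑ v ∈ Icc 1 m, v) * 2 = m * (m + 1) := by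
  induction m with
  | zero => simp
  | succ m ih =>
    rw [sum_Icc_succ_top (by omega), add_mul, ih]
    ring

lemma Finset.filter_even_Icc_one_eq_image (n : ℕ) :
    {v ∈ Icc 1 (2 * n + 1) | Even v} = (range n).image (fun k => 2 * k + 2) := by
  ext v
  simp only [mem_filter, mem_Icc, mem_image, mem_range, Nat.even_iff]
  constructor
  · rintro ⟨⟨h1, h2⟩, h3⟩
    exact ⟨v / 2 - 1, by omega, by omega⟩
  · rintro ⟨k, hk, rfl⟩
    omega

lemma Finset.card_filter_even_Icc_one (n : ℕ) : #{v ∈ Icc 1 (2 * n + 1) | Even v} = n := by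
  rw [filter_even_Icc_one_eq_image, card_image_of_injective _ (fun a b h => by simpa using h),
    card_range]

lemma Finset.sum_filter_even_Icc_one (n : ℕ) :
    ∑ v ∈ Icc 1 (2 * n + 1) with Even v, v = n * (n + 1) := by
  rw [filter_even_Icc_one_eq_image, sum_image (fun a _ b _ h => by simpa using h)]
  induction n with
  | zero => simp
  | succ n ih =>
    rw [sum_range_succ, ih]
    ring

lemma Finset.image_eq_filter_even_Icc_one {ι : Type*} {n : ℕ} {s : Finset ι} {f : ι → ℕ}
    (hf : Set.InjOn f s) (hs : #s = n) (hf_mem : ∀ i ∈ s, f i ∈ Icc 1 (2 * n + 1))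
    (hf_even : ∀ i ∈ s, Even (f i)) :
    s.image f = {v ∈ Icc 1 (2 * n + 1) | Even v} := by
  refine eq_of_subset_of_card_le (fun v hv => ?_) ?_
  · obtain ⟨i, hi, rfl⟩ := mem_image.1 hv
    exact mem_filter.2 ⟨hf_mem i hi, hf_even i hi⟩
  · rw [card_image_of_injOn hf, hs, card_filter_even_Icc_one]

namespace IsMagicPolygon2

variable {n : ℕ} {z : ZMod (2 * n) → ℕ} {c u : ℕ}

lemma label_mem_Icc (h : IsMagicPolygon2 n z c u) (x : ZMod (2 * n) ⊕ Unit) :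
    magicLabels2 n z c x ∈ Icc 1 (2 * n + 1) := by
  rw [mem_Icc, ← Set.mem_Icc, ← h.2.1]
  exact Set.mem_range_self x

lemma eq_center_or_exists_eq (h : IsMagicPolygon2 n z c u) {v : ℕ} (hv : v ∈ Icc 1 (2 * n + 1)) :
    v = c ∨ ∃ p, z p = v := by
  rw [mem_Icc, ← Set.mem_Icc, ← h.2.1] at hv
  obtain ⟨p | _, rfl⟩ := hv
  · exact Or.inr ⟨p, rfl⟩
  · exact Or.inl rfl

lemma injective (h : IsMagicPolygon2 n z c u) : Function.Injective z :=
  fun p q hpq => Sum.inl_injective (h.1 (a₁ := .inl p) (a₂ := .inl q) hpq)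

lemma ne_center (h : IsMagicPolygon2 n z c u) (p : ZMod (2 * n)) : z p ≠ c :=
  fun hp => Sum.inl_ne_inr (h.1 (a₁ := .inl p) (a₂ := .inr ()) hp)

lemma sum_boundary_add_center [NeZero n] (h : IsMagicPolygon2 n z c u) :
    ∑ p, z p + c = ∑ v ∈ Icc 1 (2 * n + 1), v := by
  have himage : univ.image (magicLabels2 n z c) = Icc 1 (2 * n + 1) := by
    apply coe_injective
    rw [coe_image, coe_univ, Set.image_univ, h.2.1, coe_Icc]
  rw [← himage, sum_image (fun x _ y _ hxy => h.1 hxy), Fintype.sum_sum_type]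
  simp [magicLabels2]

lemma sum_side_sums (h : IsMagicPolygon2 n z c u) :
    2 * ∑ k ∈ range n, z (2 * k) + ∑ k ∈ range n, z (2 * k + 1) = n * u := by
  obtain ⟨-, -, hside, -⟩ := h
  have hwrap : z (2 * (n : ℕ)) = z (2 * (0 : ℕ)) := by
    congr 1
    rw [Nat.cast_zero, mul_zero]
    exact_mod_cast ZMod.natCast_self (2 * n)
  have hshift : ∑ k ∈ range n, z (2 * (k + 1 : ℕ)) = ∑ k ∈ range n, z (2 * k) := by
    have := sum_range_succ' (fun k : ℕ => z (2 * k)) n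
    rw [sum_range_succ, hwrap] at this
    exact (add_right_cancel this).symm
  have hsum : ∑ k ∈ range n, (z (2 * k) + z (2 * k + 1) + z (2 * (k + 1 : ℕ))) = n * u := by
    refine (sum_const_nat fun k _ => ?_).trans (by rw [card_range])
    rw [← hside k]
    push_cast
    ring_nf
  rw [sum_add_distrib, sum_add_distrib, hshift] at hsum
  linarith

lemma sum_axis_sums [NeZero n] (h : IsMagicPolygon2 n z c u) : ∑ p, z p + n * c = n * u := by
  obtain ⟨-, -, -, haxis⟩ := h
  have hshift : ∑ p, z (p + (n : ℕ)) = ∑ p, z p :=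
    Fintype.sum_equiv (Equiv.addRight _) _ _ fun _ => rfl
  have hsum := Fintype.sum_congr _ _ haxis
  simp only [sum_add_distrib, sum_const, card_univ, ZMod.card, smul_eq_mul, hshift] at hsum
  linarith

lemma sum_vertices [NeZero n] (h : IsMagicPolygon2 n z c u) :
    ∑ k ∈ range n, z (2 * k) = n * c := by
  have hsides := h.sum_side_sums
  have haxes := h.sum_axis_sums
  rw [ZMod.sum_univ_eq_sum_range_even_add_odd] at haxes
  linarith

lemma exists_even_label (h : IsMagicPolygon2 n z c u) (hn : 2 ≤ n) : ∃ p, Even (z p) := by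
  by_contra! hodd
  have heven_label : ∀ v ∈ Icc 1 (2 * n + 1), Even v → v = c := by
    intro v hv hv_even
    refine (h.eq_center_or_exists_eq hv).resolve_right ?_
    rintro ⟨p, rfl⟩
    exact hodd p hv_even
  have h2 := heven_label 2 (mem_Icc.2 ⟨by omega, by omega⟩) even_two
  have h4 := heven_label 4 (mem_Icc.2 ⟨by omega, by omega⟩) (by decide)
  omega

lemma injOn_midpoints (h : IsMagicPolygon2 n z c u) :
    Set.InjOn (fun k : ℕ => z (2 * k + 1)) (range n) := by
  intro k hk j hj hkj
  have hcast : ((2 * k + 1 : ℕ) : ZMod (2 * n)) = ((2 * j + 1 : ℕ) : ZMod (2 * n)) := by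
    push_cast
    exact h.injective hkj
  rw [coe_range, Set.mem_Iio] at hk hj
  rw [ZMod.natCast_eq_natCast_iff', Nat.mod_eq_of_lt (by omega), Nat.mod_eq_of_lt (by omega)]
    at hcast
  omega

lemma even_midpoint_iff (h : IsMagicPolygon2 n z c u) (hodd : ∀ i, Odd (z (2 * i)))
    (i : ZMod (2 * n)) : Even (z (2 * i + 1)) ↔ Even u := by
  have hnext : Odd (z (2 * i + 2)) := by simpa [mul_add] using hodd (i + 1)
  have hcur := hodd i
  rw [← Nat.not_even_iff_odd] at hcur hnext
  obtain ⟨-, -, hside, -⟩ := h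
  rw [← hside i, Nat.even_add, Nat.even_add]
  tauto

lemma even_center_iff (h : IsMagicPolygon2 n z c u) (hodd : ∀ i, Odd (z (2 * i)))
    (hn : Even n) : Even c ↔ Even u := by
  obtain ⟨m, rfl⟩ := hn
  have hopposite : Odd (z (0 + ((m + m : ℕ) : ZMod (2 * (m + m))))) := by
    simpa [two_mul] using hodd m
  have hzero : Odd (z 0) := by simpa using hodd 0
  rw [← Nat.not_even_iff_odd] at hzero hopposite
  obtain ⟨-, -, -, haxis⟩ := h
  rw [← haxis 0, Nat.even_add, Nat.even_add]
  tauto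

section EvenMidpoints

variable (h : IsMagicPolygon2 n z c u) (hmid : ∀ i, Even (z (2 * i + 1)))
include h hmid

lemma image_midpoints :
    (range n).image (fun k : ℕ => z (2 * k + 1)) = {v ∈ Icc 1 (2 * n + 1) | Even v} :=
  image_eq_filter_even_Icc_one h.injOn_midpoints (card_range n)
    (fun _ _ => h.label_mem_Icc (.inl _)) (fun _ _ => hmid _)

lemma odd_center : Odd c := by
  by_contra hc
  have hmem : c ∈ (range n).image (fun k : ℕ => z (2 * k + 1)) := by
    rw [image_midpoints h hmid, mem_filter]
    exact ⟨h.label_mem_Icc (.inr ()), Nat.not_odd_iff_even.1 hc⟩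
  obtain ⟨k, -, hk⟩ := mem_image.1 hmem
  exact h.ne_center _ hk

lemma center_eq [NeZero n] : c = n + 1 := by
  have hmidpoints : ∑ k ∈ range n, z (2 * k + 1) = n * (n + 1) := by
    rw [← sum_filter_even_Icc_one n, ← image_midpoints h hmid, sum_image h.injOn_midpoints]
  have htotal := h.sum_boundary_add_center
  rw [ZMod.sum_univ_eq_sum_range_even_add_odd, h.sum_vertices, hmidpoints] at htotal
  have hgauss := sum_Icc_one_id_mul_two (2 * n + 1)
  have hprod : (n + 1) * (c + n) = (n + 1) * (2 * n + 1) := by linarith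
  have := Nat.eq_of_mul_eq_mul_left n.succ_pos hprod
  omega

end EvenMidpoints

end IsMagicPolygon2

theorem magicPolygon2_no_all_odd_vertices (n : ℕ) (hn : 3 ≤ n) :
    ¬ ∃ (z : ZMod (2 * n) → ℕ) (c u : ℕ),
      IsMagicPolygon2 n z c u ∧ ∀ i : ZMod (2 * n), Odd (z (2 * i)) := by
  rintro ⟨z, c, u, h, hodd⟩
  have : NeZero n := ⟨by omega⟩
  rcases Nat.even_or_odd u with hu | hu
  · have hmid : ∀ i, Even (z (2 * i + 1)) := fun i => (h.even_midpoint_iff hodd i).2 hu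
    have hc_odd := h.odd_center hmid
    have hn_even : Even n := by
      rwa [h.center_eq hmid, Nat.odd_add_one, Nat.not_odd_iff_even] at hc_odd
    exact Nat.not_even_iff_odd.2 hc_odd ((h.even_center_iff hodd hn_even).2 hu)
  · obtain ⟨p, hp⟩ := h.exists_even_label (by omega)
    obtain ⟨i, rfl | rfl⟩ := ZMod.exists_eq_two_mul_or_eq_two_mul_add_one p
    · exact Nat.not_even_iff_odd.2 (hodd i) hp
    · exact Nat.not_even_iff_odd.2 hu ((h.even_midpoint_iff hodd i).1 hp)
end

section
/- Let n ≥ 3 and k ≥ 1, and let (x, c, u) be a combinatorial degenerated magic polygon D(n,k). Then the magic sum satisfies u = (k+1)·(k²·(n−2)+k+2)/2. -/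
/-- The labeling function of a combinatorial degenerated magic polygon `D(n,k)`:
the labels `x t p` of the points on the `k` polygons (root vertex excluded)
together with the root label `c`. -/
def degMagicLabels (n k : ℕ) (x : Fin k → Fin (k * (n - 2) + 1) → ℕ) (c : ℕ) :
    (Fin k × Fin (k * (n - 2) + 1)) ⊕ Unit → ℕ :=
  Sum.elim (fun q => x q.1 q.2) (fun _ => c)

open Fin.NatCast in
/-- `(x, c, u)` is a combinatorial degenerated magic polygon `D(n,k)`:
(1) the `k²(n−2)+k+1` labels are exactly `1, …, k²(n−2)+k+1`, each occurring once;
(2) every edge sum `∑_{j=0}^{k} x t (i·k + j)`, for an edge not adjacent to the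
root (`0 ≤ i ≤ n−3`), equals `u`;
(3) for every position `p`, the sum `(∑ t, x t p) + c` along the segment joining
the root vertex to the boundary of the largest polygon equals `u`. -/
def IsDegMagicPolygon (n k : ℕ) (x : Fin k → Fin (k * (n - 2) + 1) → ℕ) (c u : ℕ) : Prop :=
  Function.Injective (degMagicLabels n k x c) ∧
  Set.range (degMagicLabels n k x c) = Set.Icc 1 (k ^ 2 * (n - 2) + k + 1) ∧
  (∀ t : Fin k, ∀ i ∈ Finset.range (n - 2),
    ∑ j ∈ Finset.range (k + 1), x t ((i * k + j : ℕ)) = u) ∧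
  (∀ p : Fin (k * (n - 2) + 1), (∑ t : Fin k, x t p) + c = u)

/-!
Let `T` be the sum of all labels off the root and `I` the sum of the labels at the `k (n - 3)`
polygon vertices where two edges meet. Summing all labels gives `2 (T + c) = N (N + 1)` with
`N = k²(n-2)+k+1`; summing all segments gives `T + M c = M u` with `M = k(n-2)+1`; summing all
edges counts `I` twice, `T + I = k (n-2) u`; summing the segments through those vertices gives
`I + (n-3) c = (n-3) u`. Eliminating `T` and `I` leaves `(n-2) u = (n-2) (k+1) c`, so
`u = (k+1) c`, and then the first two equations give `2 c = N + 1`.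
-/

open Finset Fin.NatCast

theorem Finset.sum_Icc_id_mul_two (N : ℕ) : (∑ i ∈ Icc 1 N, i) * 2 = N * (N + 1) := by
  induction N with
  | zero => simp
  | succ N ih => rw [sum_Icc_succ_top (by omega), add_mul, ih]; ring

theorem Function.Injective.sum_univ_eq_sum_of_range_eq {α β : Type*} [Fintype α]
    [AddCommMonoid β] [DecidableEq β] {f : α → β} (hf : Function.Injective f) {s : Finset β}
    (hs : Set.range f = s) : ∑ a, f a = ∑ b ∈ s, b := by
  have himage : univ.image f = s := by
    rw [← coe_inj, coe_image, coe_univ, Set.image_univ, hs]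
  rw [← himage, sum_image hf.injOn]

theorem Finset.sum_range_succ_overlapping_blocks {β : Type*} [AddCommMonoid β] (f : ℕ → β)
    (k a : ℕ) :
    ∑ i ∈ range (a + 1), ∑ j ∈ range (k + 1), f (i * k + j)
      = ∑ m ∈ range ((a + 1) * k + 1), f m + ∑ i ∈ range a, f ((i + 1) * k) := by
  induction a with
  | zero => simp
  | succ a ih =>
    rw [sum_range_succ _ (a + 1), ih, sum_range_succ (fun i => f ((i + 1) * k)) a,
      show (a + 1 + 1) * k + 1 = (a + 1) * k + 1 + k by ring, sum_range_add f _ k,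
      sum_range_succ' (fun j => f ((a + 1) * k + j))]
    simp only [add_zero, add_assoc ((a + 1) * k) 1, add_comm 1]
    abel

namespace IsDegMagicPolygon

variable {n k : ℕ} {x : Fin k → Fin (k * (n - 2) + 1) → ℕ} {c u : ℕ}

theorem two_mul_sum_labels (h : IsDegMagicPolygon n k x c u) :
    2 * (∑ t, ∑ p, x t p + c) = (k ^ 2 * (n - 2) + k + 1) * (k ^ 2 * (n - 2) + k + 2) := by
  have hsum := h.1.sum_univ_eq_sum_of_range_eq (h.2.1.trans (coe_Icc _ _).symm)
  simp only [degMagicLabels, Fintype.sum_sum_type, Fintype.sum_prod_type, Sum.elim_inl,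
    Sum.elim_inr, univ_unique, sum_singleton] at hsum
  rw [hsum, mul_comm, sum_Icc_id_mul_two]

theorem sum_sum_comp_add_card_mul_root (h : IsDegMagicPolygon n k x c u) {ι : Type*}
    (s : Finset ι) (g : ι → Fin (k * (n - 2) + 1)) :
    ∑ t, ∑ i ∈ s, x t (g i) + #s * c = #s * u := by
  rw [sum_comm, ← smul_eq_mul, ← sum_const, ← sum_add_distrib, ← smul_eq_mul, ← sum_const]
  exact sum_congr rfl fun i _ => h.2.2.2 (g i)

theorem sum_boundary_add_sum_vertices (h : IsDegMagicPolygon n k x c u) (hn : 3 ≤ n)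
    (t : Fin k) :
    ∑ p, x t p + ∑ i ∈ range (n - 3), x t (((i + 1) * k : ℕ)) = (n - 2) * u := by
  have hblocks := sum_range_succ_overlapping_blocks (fun m : ℕ => x t m) k (n - 3)
  rw [show n - 3 + 1 = n - 2 by omega, sum_congr rfl (h.2.2.1 t), sum_const, card_range,
    smul_eq_mul, mul_comm (n - 2) k, ← Fin.sum_univ_eq_sum_range] at hblocks
  simpa only [Fin.cast_val_eq_self] using hblocks.symm

theorem magicSum_eq_succ_mul_root (h : IsDegMagicPolygon n k x c u) (hn : 3 ≤ n) :
    u = (k + 1) * c := by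
  have hpoints := h.sum_sum_comp_add_card_mul_root univ id
  have hvertices := h.sum_sum_comp_add_card_mul_root (range (n - 3)) fun i => ((i + 1) * k : ℕ)
  have hedges : ∑ t, (∑ p, x t p + ∑ i ∈ range (n - 3), x t (((i + 1) * k : ℕ)))
      = ∑ _t : Fin k, (n - 2) * u := sum_congr rfl fun t _ => h.sum_boundary_add_sum_vertices hn t
  simp only [card_univ, Fintype.card_fin, card_range, id] at hpoints hvertices
  rw [sum_add_distrib, sum_const, card_univ, Fintype.card_fin, smul_eq_mul] at hedges
  obtain ⟨m, rfl⟩ : ∃ m, n = m + 3 := ⟨n - 3, by omega⟩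
  simp only [Nat.add_sub_cancel, show m + 3 - 2 = m + 1 by omega] at hpoints hvertices hedges
  refine Nat.eq_of_mul_eq_mul_left (Nat.succ_pos m) ?_
  linarith

theorem two_mul_root (h : IsDegMagicPolygon n k x c u) (hn : 3 ≤ n) :
    2 * c = k ^ 2 * (n - 2) + k + 2 := by
  have hpoints := h.sum_sum_comp_add_card_mul_root univ id
  simp only [card_univ, Fintype.card_fin, id] at hpoints
  have htotal := h.two_mul_sum_labels
  rw [h.magicSum_eq_succ_mul_root hn] at hpoints
  refine Nat.eq_of_mul_eq_mul_left (show 0 < k ^ 2 * (n - 2) + k + 1 by positivity) ?_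
  linarith

end IsDegMagicPolygon

theorem degMagicPolygon_magicSum_general (n k : ℕ) (hn : 3 ≤ n)
    (x : Fin k → Fin (k * (n - 2) + 1) → ℕ) (c u : ℕ)
    (h : IsDegMagicPolygon n k x c u) :
    u = (k + 1) * (k ^ 2 * (n - 2) + k + 2) / 2 := by
  rw [← h.two_mul_root hn, mul_left_comm, Nat.mul_div_cancel_left _ two_pos,
    h.magicSum_eq_succ_mul_root hn]

theorem degMagicPolygon_magicSum (n k : ℕ) (hn : 3 ≤ n) (hk : 1 ≤ k)
    (x : Fin k → Fin (k * (n - 2) + 1) → ℕ) (c u : ℕ)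
    (h : IsDegMagicPolygon n k x c u) :
    u = (k + 1) * (k ^ 2 * (n - 2) + k + 2) / 2 :=
  degMagicPolygon_magicSum_general n k hn x c u h
end
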